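/- Let n ≥ 3 be odd, m = (n+1)/2, and let θ ∈ ℝ^n satisfy θ₂ ≠ 0 and Ā(θ) invertible. Suppose P is an m×m real orthogonal matrix and E an m×m real diagonal matrix with Ā(θ) = P E Pᵀ. For 1 ≤ k ≤ m let 𝕀_k = I_m − 2 e_k e_kᵀ (the identity with the k-th diagonal entry replaced by −1). Then there exists k ∈ {1, …, m} such that |θ₁| ≠ |(P E 𝕀_k Pᵀ)₁₁|. -/

import Mathlib

open Matrix

/-- For `n = 2m-1` (odd), the `m×m` symmetric tridiagonal matrix `Ā(θ)` with
`Ā_{i,i} = θ_{2i-1}` and `Ā_{i,i+1} = Ā_{i+1,i} = -θ_{2i}` (1-indexed). -/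
def Abar (m : ℕ) (θ : Fin (2 * m - 1) → ℝ) : Matrix (Fin m) (Fin m) ℝ :=
  Matrix.of fun i j =>
    if i = j then θ ⟨2 * (i : ℕ), by have := i.isLt; omega⟩
    else if h : (i : ℕ) + 1 = (j : ℕ) then -θ ⟨2 * (i : ℕ) + 1, by have := j.isLt; omega⟩
    else if h' : (j : ℕ) + 1 = (i : ℕ) then -θ ⟨2 * (j : ℕ) + 1, by have := i.isLt; omega⟩
    else 0

/-- `𝕀_k = I - 2 eₖ eₖᵀ`: the identity matrix with the `k`-th diagonal entry replaced
by `-1`. -/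
def signFlip (m : ℕ) (k : Fin m) : Matrix (Fin m) (Fin m) ℝ :=
  1 - 2 • Matrix.single k k (1 : ℝ)

lemma mul_isDiag_apply {m : ℕ} {E M : Matrix (Fin m) (Fin m) ℝ} (hE : E.IsDiag)
    (i j : Fin m) : (M * E) i j = M i j * E j j := by
  rw [Matrix.mul_apply]
  apply Finset.sum_eq_single j
  · intro b _ hb
    rw [hE hb, mul_zero]
  · simp

lemma triple_apply {m : ℕ} (P E : Matrix (Fin m) (Fin m) ℝ) (hE : E.IsDiag)
    (i j : Fin m) : (P * E * Pᵀ) i j = ∑ l, P i l * E l l * P j l := by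
  rw [Matrix.mul_apply]
  refine Finset.sum_congr rfl fun l _ => ?_
  rw [mul_isDiag_apply hE, Matrix.transpose_apply]

lemma signFlip_apply {m : ℕ} (k l l' : Fin m) :
    signFlip m k l l' = (if l = l' then 1 else 0) - 2 * (if k = l ∧ k = l' then 1 else 0) := by
  simp [signFlip, Matrix.single, Matrix.one_apply, Matrix.sub_apply]

lemma signFlip_isDiag {m : ℕ} (k : Fin m) : (signFlip m k).IsDiag := by
  intro i j h
  rw [signFlip_apply, if_neg h]
  rcases eq_or_ne k i with rfl | hik
  · simp [h]
  · simp [hik]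

/-- If `θ₂ ≠ 0`, `Ā(θ)` is invertible and `Ā(θ) = P E Pᵀ` is a spectral decomposition
(`P` orthogonal, `E` diagonal), then for some `k` the sign-flipped product satisfies
`|θ₁| ≠ |(P E 𝕀_k Pᵀ)₁₁|`. -/
theorem stmt4 (m : ℕ) (hm : 2 ≤ m) (θ : Fin (2 * m - 1) → ℝ)
    (hθ2 : θ ⟨1, by omega⟩ ≠ 0) (hA : IsUnit (Abar m θ))
    (P E : Matrix (Fin m) (Fin m) ℝ)
    (hP : P * Pᵀ = 1) (hP' : Pᵀ * P = 1) (hE : E.IsDiag)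
    (hdecomp : Abar m θ = P * E * Pᵀ) :
    ∃ k : Fin m,
      |θ ⟨0, by omega⟩| ≠ |(P * E * signFlip m k * Pᵀ) ⟨0, by omega⟩ ⟨0, by omega⟩| := by
  by_contra hcon
  push_neg at hcon
  set i0 : Fin m := ⟨0, by omega⟩ with hi0
  set i1 : Fin m := ⟨1, by omega⟩ with hi1
  set t : ℝ := θ ⟨0, by omega⟩ with ht
  set c : Fin m → ℝ := fun l => E l l * (P i0 l) ^ 2 with hc
  -- E * signFlip is diagonal
  have hEsf : ∀ k : Fin m, (E * signFlip m k).IsDiag := by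
    intro k i j h
    rw [mul_isDiag_apply (signFlip_isDiag k), hE h, zero_mul]
  -- sum of c is t
  have hsumc : ∑ l, c l = t := by
    have h := triple_apply P E hE i0 i0
    rw [← hdecomp] at h
    have hA00 : Abar m θ i0 i0 = t := by simp [Abar, ht, hi0]
    rw [hA00] at h
    rw [h]
    refine Finset.sum_congr rfl fun l _ => ?_
    simp [hc]; ring
  -- the entry formula
  have hentry : ∀ k : Fin m,
      (P * E * signFlip m k * Pᵀ) i0 i0 = t - 2 * c k := by
    intro k
    have h1 : P * E * signFlip m k * Pᵀ = P * (E * signFlip m k) * Pᵀ := by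
      rw [mul_assoc P E]
    rw [h1, triple_apply P _ (hEsf k)]
    have h2 : ∀ l : Fin m, P i0 l * (E * signFlip m k) l l * P i0 l
        = c l - (if l = k then 2 * c l else 0) := by
      intro l
      rw [mul_isDiag_apply (signFlip_isDiag k), signFlip_apply]
      rcases eq_or_ne l k with rfl | hlk
      · simp [hc]; ring
      · simp [hlk, Ne.symm hlk, hc]; ring
    rw [Finset.sum_congr rfl fun l _ => h2 l, Finset.sum_sub_distrib,
      Finset.sum_ite_eq' Finset.univ k (fun l => 2 * c l)]
    simp only [Finset.mem_univ, if_true]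
    rw [hsumc]
  -- E's diagonal entries are nonzero
  have hEunit : IsUnit E := by
    have hPu : IsUnit P := @isUnit_of_invertible _ _ P (invertibleOfRightInverse P Pᵀ hP)
    have hPtu : IsUnit Pᵀ := @isUnit_of_invertible _ _ Pᵀ (invertibleOfRightInverse Pᵀ P hP')
    have heq : E = Pᵀ * Abar m θ * P := by
      rw [hdecomp,
        show Pᵀ * (P * E * Pᵀ) * P = (Pᵀ * P) * E * (Pᵀ * P) from by noncomm_ring, hP']
      simp
    rw [heq]
    exact (hPtu.mul hA).mul hPu
  have hEne : ∀ l : Fin m, E l l ≠ 0 := by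
    intro l
    have hdet : E.det ≠ 0 := by
      intro h
      exact (Matrix.isUnit_iff_isUnit_det E).mp hEunit |>.ne_zero (by simpa using h)
    have : E.det = ∏ i, E i i := by
      conv_lhs => rw [← hE.diagonal_diag]
      rw [Matrix.det_diagonal]
      rfl
    rw [this] at hdet
    exact fun h => hdet (Finset.prod_eq_zero (Finset.mem_univ l) h)
  -- each c k is 0 or t
  have hck : ∀ k : Fin m, c k = 0 ∨ c k = t := by
    intro k
    have := hcon k
    rw [hentry k] at this
    rcases abs_eq_abs.mp this with h | h
    · left; linarith
    · right; linarith
  -- sum of squares of the first row of P is 1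
  have hrow : ∑ l, (P i0 l) ^ 2 = 1 := by
    have := congrFun (congrFun hP i0) i0
    rw [Matrix.mul_apply, Matrix.one_apply_eq] at this
    rw [← this]
    refine Finset.sum_congr rfl fun l _ => ?_
    rw [Matrix.transpose_apply]; ring
  have hczero : ∀ k : Fin m, c k = 0 ↔ P i0 k = 0 := by
    intro k
    constructor
    · intro h
      have := mul_eq_zero.mp h
      rcases this with h | h
      · exact absurd h (hEne k)
      · exact pow_eq_zero_iff (by norm_num) |>.mp h
    · intro h; simp [hc, h]
  rcases eq_or_ne t 0 with ht0 | ht0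
  · -- t = 0 : all c k = 0, so first row of P is zero, contradicting hrow
    have : ∀ l : Fin m, (P i0 l) ^ 2 = 0 := by
      intro l
      rcases hck l with h | h
      · rw [(hczero l).mp h]; ring
      · rw [(hczero l).mp (h.trans ht0)]; ring
    rw [Finset.sum_congr rfl fun l _ => this l] at hrow
    simp at hrow
  · -- t ≠ 0 : the support of the first row of P is a singleton
    set S : Finset (Fin m) := Finset.univ.filter (fun k => P i0 k ≠ 0) with hS
    clear_value S
    have hsum2 : ∑ l ∈ S, c l = t := by
      rw [← hsumc]
      apply Finset.sum_subset (Finset.subset_univ S)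
      intro x _ hx
      simp [hS] at hx
      simp [hc, hx]
    have hcS : ∀ l ∈ S, c l = t := by
      intro l hl
      rcases hck l with h | h
      · simp [hS] at hl
        exact absurd ((hczero l).mp h) hl
      · exact h
    have hcard : S.card = 1 := by
      rw [Finset.sum_congr rfl hcS, Finset.sum_const, nsmul_eq_mul] at hsum2
      have h1 : (S.card : ℝ) = 1 :=
        mul_right_cancel₀ ht0 (hsum2.trans (one_mul t).symm)
      exact_mod_cast h1
    obtain ⟨k0, hk0⟩ := Finset.card_eq_one.mp hcard
    have hk0ne : P i0 k0 ≠ 0 := by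
      have : k0 ∈ S := hk0 ▸ Finset.mem_singleton_self k0
      simpa [hS] using this
    have hother : ∀ l : Fin m, l ≠ k0 → P i0 l = 0 := by
      intro l hl
      by_contra h
      have : l ∈ S := by simp [hS, h]
      rw [hk0] at this
      exact hl (Finset.mem_singleton.mp this)
    -- orthogonality of rows 0 and 1 of P
    have hne01 : i0 ≠ i1 := by
      intro h
      have := congrArg Fin.val h
      simp [hi0, hi1] at this
    have horth : ∑ l, P i0 l * P i1 l = 0 := by
      have := congrFun (congrFun hP i0) i1
      rw [Matrix.mul_apply, Matrix.one_apply_ne hne01] at this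
      rw [← this]
      exact Finset.sum_congr rfl fun l _ => by rw [Matrix.transpose_apply]
    have hP1k0 : P i1 k0 = 0 := by
      have : ∑ l, P i0 l * P i1 l = P i0 k0 * P i1 k0 := by
        apply Finset.sum_eq_single k0
        · intro b _ hb; rw [hother b hb, zero_mul]
        · simp
      rw [this] at horth
      exact (mul_eq_zero.mp horth).resolve_left hk0ne
    -- entry (0,1) of Abar is -θ₁, but it equals 0
    have hA01 : Abar m θ i0 i1 = -θ ⟨1, by omega⟩ := by
      simp [Abar, hi0, hi1, hne01]
    have h01 : Abar m θ i0 i1 = 0 := by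
      rw [hdecomp, triple_apply P E hE]
      apply Finset.sum_eq_zero
      intro l _
      rcases eq_or_ne l k0 with rfl | hl
      · rw [hP1k0, mul_zero]
      · rw [hother l hl, zero_mul, zero_mul]
    rw [hA01] at h01
    exact hθ2 (by linarith)
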